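/- Let Q be a standard Young tableau with n cells, and u ≤ k+1 < n. Then u ∈ Des(Q) if and only if k+1 ∈ Des(∂_u^{k+1} ∘ ∂_{u+1}^{k+2} Q). -/

import Mathlib

open scoped Classical

/-- Successor in `Fin n` (cyclic, but only used under the guard `i+1 < n`). -/
def finSucc {n : ℕ} (i : Fin n) : Fin n := ⟨((i : ℕ) + 1) % n, Nat.mod_lt _ i.pos⟩

def pDes {n : ℕ} (π : Equiv.Perm (Fin n)) : Finset (Fin n) :=
  Finset.univ.filter fun i => (i : ℕ) + 1 < n ∧ π (finSucc i) < π i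

/-- The inverse `J`-class `R_J^{-1} = {σ : Des σ⁻¹ ⊆ J}`, as a multiset. -/
noncomputable def RinvM (n : ℕ) (J : Finset (Fin n)) : Multiset (Equiv.Perm (Fin n)) :=
  (Finset.univ.filter fun σ : Equiv.Perm (Fin n) => pDes σ⁻¹ ⊆ J).val

/-- Product of multisets of permutations (with multiplicity). -/
def mprod {n : ℕ} (A B : Multiset (Equiv.Perm (Fin n))) : Multiset (Equiv.Perm (Fin n)) :=
  A.bind fun a => B.map fun b => a * b

/-- The composition `co(J)` of `n` corresponding to `J ⊆ [n-1]`, as a list of parts. -/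
def compList (n : ℕ) (J : Finset (Fin n)) : List ℕ :=
  let l := (J.sort (· ≤ ·)).map fun i => (i : ℕ) + 1
  List.zipWith (· - ·) (l ++ [n]) (0 :: l)

/-- `co(J)` as a multiset of parts (so `compM n J = compM n K` means `J ∼ K`). -/
def compM (n : ℕ) (J : Finset (Fin n)) : Multiset ℕ := (compList n J : Multiset ℕ)
/-- A standard Young tableau with `n` cells: a Young diagram filled bijectively
with the values `1, …, n`, strictly increasing along rows and columns.
Cells outside the diagram carry the value `0`. -/
structure SYT (n : ℕ) where
  shape : YoungDiagram
  val : ℕ × ℕ → ℕ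
  zero_of_not_mem : ∀ c, c ∉ shape → val c = 0
  bijOn : Set.BijOn val shape.cells (Finset.Icc 1 n)
  row_lt : ∀ i j : ℕ, (i, j + 1) ∈ shape → val (i, j) < val (i, j + 1)
  col_lt : ∀ i j : ℕ, (i + 1, j) ∈ shape → val (i, j) < val (i + 1, j)

/-- The descent set of a standard Young tableau: `u ∈ Des Q` iff `u+1` lies in a
strictly lower row than `u` (rows indexed by the first coordinate). -/
noncomputable def SYT.des {n : ℕ} (Q : SYT n) : Finset ℕ :=
  (Finset.Icc 1 (n - 1)).filter fun u =>
    ∃ c ∈ Q.shape, ∃ d ∈ Q.shape, Q.val c = u ∧ Q.val d = u + 1 ∧ c.1 < d.1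

/-- `path` is the maximal promotion path of the value `a` in the skew subtableau of `Q`
formed by the values in `[a,b]`: it starts at the box containing `a`, and repeatedly
moves to whichever of the boxes immediately below or to the right holds the smaller
value among those inside the skew region, stopping when no such box exists. -/
def IsPromPath {n : ℕ} (Q : SYT n) (a b : ℕ) (path : List (ℕ × ℕ)) : Prop :=
  path ≠ [] ∧
  (∀ c ∈ path, c ∈ Q.shape ∧ Q.val c ∈ Finset.Icc a b) ∧
  (∃ c, path.head? = some c ∧ Q.val c = a) ∧
  (path.Chain' fun c d =>
    (d = (c.1 + 1, c.2) ∨ d = (c.1, c.2 + 1)) ∧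
    ∀ e, (e = (c.1 + 1, c.2) ∨ e = (c.1, c.2 + 1)) → e ∈ Q.shape →
      Q.val e ∈ Finset.Icc a b → Q.val d ≤ Q.val e) ∧
  (∀ last, path.getLast? = some last →
    ∀ e, (e = (last.1 + 1, last.2) ∨ e = (last.1, last.2 + 1)) → e ∈ Q.shape →
      Q.val e ∉ Finset.Icc a b)

/-- `IsPromotion a b Q Q'` holds iff `Q' = ∂_a^b Q`: delete the value `a`, slide the
values along the promotion path, place `b+1` in the vacated final box, and decrement
every value of the skew region (now `[a+1, b+1]`) by `1`. -/
def IsPromotion {n : ℕ} (a b : ℕ) (Q Q' : SYT n) : Prop :=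
  Q'.shape = Q.shape ∧ ∃ path, IsPromPath Q a b path ∧
    (∀ i (h : i + 1 < path.length),
      Q'.val (path.get ⟨i, Nat.lt_of_succ_lt h⟩) = Q.val (path.get ⟨i + 1, h⟩) - 1) ∧
    (∀ last, path.getLast? = some last → Q'.val last = b) ∧
    (∀ c ∈ Q.shape, c ∉ path →
      Q'.val c = if Q.val c ∈ Finset.Icc (a + 1) b then Q.val c - 1 else Q.val c)

/-- `IsPromSeq vs Q Q'` holds iff `Q' = ∂_{v_1}^{n-m+1} ∘ ⋯ ∘ ∂_{v_m}^{n} Q` where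
`vs = [v_1 < … < v_m]`, i.e. `Q' = ∂_V Q` in the notation of the paper (with `m = n - k`). -/
def IsPromSeq {n : ℕ} (vs : List ℕ) (Q Q' : SYT n) : Prop :=
  ∃ Qs : ℕ → SYT n, Qs 0 = Q ∧ Qs vs.length = Q' ∧
    ∀ t (h : t < vs.length),
      IsPromotion (vs.get ⟨vs.length - 1 - t, by omega⟩) (n - t) (Qs t) (Qs (t + 1))

/-!
Let `p` be the promotion path of `u + 1` in `Q` and `q` that of `u` in `Q1 = ∂_{u+1}^{k+2} Q`.
The entries `u`, `u + 1` of `Q` sit at the starts of `q` and `p`, and the entries `k + 1`, `k + 2`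
of `Q2` at their ends. If `q` starts strictly above `p`, then `q` keeps to the north-east of `p`:
each cell `x` of `q` is the top of a vertical step of `p`, or all of `p` lies strictly below or
strictly left of `x` (`AbovePath p x`). Because a slide always moves the smaller neighbour, `q`
steps down onto `p` only where `p` continues down, and a down-step of `q` off `p` never lands left
of a cell of `p` in the same row. At the end of `q` this puts the end of `p` in a lower row. The
converse is the same statement for the transposed tableaux, since of two consecutive entries the
larger one lies either strictly lower or strictly further right, never both.
-/

theorem Prod.lt_mk_succ_fst (c : ℕ × ℕ) : c < (c.1 + 1, c.2) :=
  Prod.lt_iff.mpr (.inl ⟨Nat.lt_succ_self _, le_rfl⟩)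

theorem Prod.lt_mk_succ_snd (c : ℕ × ℕ) : c < (c.1, c.2 + 1) :=
  Prod.lt_iff.mpr (.inr ⟨le_rfl, Nat.lt_succ_self _⟩)

namespace SYT

variable {n : ℕ} (T : SYT n)

theorem mem_of_le {c d : ℕ × ℕ} (hd : d ∈ T.shape) (h : c ≤ d) : c ∈ T.shape :=
  T.shape.up_left_mem h.1 h.2 hd

theorem val_lt_val {c d : ℕ × ℕ} (hd : d ∈ T.shape) (h : c < d) : T.val c < T.val d := by
  induction d using WellFoundedLT.induction with
  | _ d ih =>
    obtain ⟨i, j⟩ := d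
    rcases Prod.lt_iff.mp h with ⟨hi, hj⟩ | ⟨hi, hj⟩
    · obtain ⟨i, rfl⟩ : ∃ i', i = i' + 1 := ⟨i - 1, by simp at hi; omega⟩
      have hup := Prod.lt_mk_succ_fst (i, j)
      rcases (show c ≤ (i, j) from ⟨Nat.le_of_lt_succ hi, hj⟩).eq_or_lt with rfl | hc
      · exact T.col_lt _ _ hd
      · exact (ih _ hup (T.mem_of_le hd hup.le) hc).trans (T.col_lt _ _ hd)
    · obtain ⟨j, rfl⟩ : ∃ j', j = j' + 1 := ⟨j - 1, by simp at hj; omega⟩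
      have hleft := Prod.lt_mk_succ_snd (i, j)
      rcases (show c ≤ (i, j) from ⟨hi, Nat.le_of_lt_succ hj⟩).eq_or_lt with rfl | hc
      · exact T.row_lt _ _ hd
      · exact (ih _ hleft (T.mem_of_le hd hleft.le) hc).trans (T.row_lt _ _ hd)

theorem val_le_val {c d : ℕ × ℕ} (hd : d ∈ T.shape) (h : c ≤ d) : T.val c ≤ T.val d := by
  rcases h.eq_or_lt with rfl | h
  · rfl
  · exact (T.val_lt_val hd h).le

theorem eq_of_val_eq {c d : ℕ × ℕ} (hc : c ∈ T.shape) (hd : d ∈ T.shape)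
    (h : T.val c = T.val d) : c = d :=
  T.bijOn.injOn (by simpa using hc) (by simpa using hd) h

theorem val_mem_Icc {c : ℕ × ℕ} (hc : c ∈ T.shape) : T.val c ∈ Finset.Icc 1 n := by
  simpa using T.bijOn.mapsTo (by simpa using hc)

theorem exists_val_eq {v : ℕ} (hv : v ∈ Finset.Icc 1 n) : ∃ c ∈ T.shape, T.val c = v := by
  obtain ⟨c, hc, rfl⟩ := T.bijOn.surjOn (by simpa using hv)
  exact ⟨c, by simpa using hc, rfl⟩

theorem mem_des_iff {v : ℕ} {c d : ℕ × ℕ} (hc : c ∈ T.shape) (hd : d ∈ T.shape)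
    (hcv : T.val c = v) (hdv : T.val d = v + 1) : v ∈ T.des ↔ c.1 < d.1 := by
  have h1 := T.val_mem_Icc hc
  have h2 := T.val_mem_Icc hd
  simp only [Finset.mem_Icc] at h1 h2
  simp only [des, Finset.mem_filter, Finset.mem_Icc]
  constructor
  · rintro ⟨-, c', hc', d', hd', hcv', hdv', hlt⟩
    rwa [T.eq_of_val_eq hc hc' (hcv.trans hcv'.symm), T.eq_of_val_eq hd hd' (hdv.trans hdv'.symm)]
  · exact fun hlt => ⟨by omega, c, hc, d, hd, hcv, hdv, hlt⟩

theorem fst_lt_iff_not_snd_lt {c d : ℕ × ℕ} (hc : c ∈ T.shape) (hd : d ∈ T.shape)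
    (hcd : T.val d = T.val c + 1) : c.1 < d.1 ↔ ¬ c.2 < d.2 := by
  constructor
  · intro h1 h2
    have hce : c < (c.1, d.2) := Prod.lt_iff.mpr (.inr ⟨le_rfl, h2⟩)
    have hed : ((c.1, d.2) : ℕ × ℕ) < d := Prod.lt_iff.mpr (.inl ⟨h1, le_rfl⟩)
    have := T.val_lt_val (T.mem_of_le hd hed.le) hce
    have := T.val_lt_val hd hed
    omega
  · intro h2
    by_contra h1
    have := T.val_le_val hc (show d ≤ c from ⟨not_lt.mp h1, not_lt.mp h2⟩)
    omega

def transpose : SYT n where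
  shape := T.shape.transpose
  val c := T.val c.swap
  zero_of_not_mem c hc := T.zero_of_not_mem _ (by simpa [YoungDiagram.mem_transpose] using hc)
  bijOn := by
    refine T.bijOn.comp
      ⟨fun c hc => ?_, Prod.swap_injective.injOn, fun c hc => ⟨c.swap, ?_, ?_⟩⟩
    · simpa [YoungDiagram.mem_transpose] using hc
    · simpa [YoungDiagram.mem_transpose] using hc
    · simp
  row_lt i j h := T.col_lt j i (by simpa [YoungDiagram.mem_transpose] using h)
  col_lt i j h := T.row_lt j i (by simpa [YoungDiagram.mem_transpose] using h)

@[simp] theorem transpose_val (c : ℕ × ℕ) : T.transpose.val c = T.val c.swap := rfl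

@[simp] theorem mem_transpose_shape {c : ℕ × ℕ} :
    c ∈ T.transpose.shape ↔ c.swap ∈ T.shape :=
  YoungDiagram.mem_transpose

end SYT

section Promotion

variable {n a b : ℕ} {Q Q' : SYT n} {p : List (ℕ × ℕ)}

def PromotesAlong (a b : ℕ) (Q Q' : SYT n) (path : List (ℕ × ℕ)) : Prop :=
  IsPromPath Q a b path ∧
    (∀ i (h : i + 1 < path.length),
      Q'.val (path.get ⟨i, Nat.lt_of_succ_lt h⟩) = Q.val (path.get ⟨i + 1, h⟩) - 1) ∧
    (∀ last, path.getLast? = some last → Q'.val last = b) ∧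
    (∀ c ∈ Q.shape, c ∉ path →
      Q'.val c = if Q.val c ∈ Finset.Icc (a + 1) b then Q.val c - 1 else Q.val c)

theorem isPromotion_iff :
    IsPromotion a b Q Q' ↔ Q'.shape = Q.shape ∧ ∃ p, PromotesAlong a b Q Q' p :=
  Iff.rfl

namespace IsPromPath

theorem mem_shape (hp : IsPromPath Q a b p) {c : ℕ × ℕ} (hc : c ∈ p) : c ∈ Q.shape :=
  (hp.2.1 c hc).1

theorem val_mem_Icc (hp : IsPromPath Q a b p) {c : ℕ × ℕ} (hc : c ∈ p) :
    Q.val c ∈ Finset.Icc a b :=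
  (hp.2.1 c hc).2

theorem val_head (hp : IsPromPath Q a b p) (hne : p ≠ []) : Q.val (p.head hne) = a := by
  obtain ⟨-, -, ⟨c₀, hc₀, hc₀v⟩, -, -⟩ := hp
  rwa [Option.some_inj.mp ((List.head?_eq_some_head hne).symm.trans hc₀)]

theorem pairwise_lt (hp : IsPromPath Q a b p) : p.Pairwise (· < ·) := by
  obtain ⟨-, -, -, hchain, -⟩ := hp
  refine List.isChain_iff_pairwise.mp (hchain.imp fun c d hcd => ?_)
  rcases hcd.1 with rfl | rfl
  exacts [Prod.lt_mk_succ_fst c, Prod.lt_mk_succ_snd c]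

theorem le_total (hp : IsPromPath Q a b p) {c d : ℕ × ℕ} (hc : c ∈ p) (hd : d ∈ p) :
    c ≤ d ∨ d ≤ c := by
  obtain ⟨i, hi, rfl⟩ := List.mem_iff_getElem.mp hc
  obtain ⟨j, hj, rfl⟩ := List.mem_iff_getElem.mp hd
  have hlt := List.pairwise_iff_getElem.mp hp.pairwise_lt
  rcases lt_trichotomy i j with hij | rfl | hij
  exacts [.inl (hlt i j hi hj hij).le, .inl le_rfl, .inr (hlt j i hj hi hij).le]

theorem mem_of_val_eq (hp : IsPromPath Q a b p) {c : ℕ × ℕ} (hc : c ∈ Q.shape)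
    (hcv : Q.val c = a) : c ∈ p := by
  rw [Q.eq_of_val_eq hc (hp.mem_shape (List.head_mem hp.1)) (hcv.trans (hp.val_head hp.1).symm)]
  exact List.head_mem hp.1

theorem le_of_val_eq (hp : IsPromPath Q a b p) {c d : ℕ × ℕ} (hc : c ∈ p) (hd : d ∈ p)
    (hcv : Q.val c = a) : c ≤ d := by
  rcases hp.le_total hc hd with hcd | hdc
  · exact hcd
  · have h1 := Q.val_le_val (hp.mem_shape hc) hdc
    have h2 := Finset.mem_Icc.mp (hp.val_mem_Icc hd)
    rw [Q.eq_of_val_eq (hp.mem_shape hd) (hp.mem_shape hc) (by omega)]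

theorem val_eq_or_exists_pred (hp : IsPromPath Q a b p) {c : ℕ × ℕ} (hc : c ∈ p) :
    Q.val c = a ∨ ∃ c' ∈ p, c = (c'.1 + 1, c'.2) ∨ c = (c'.1, c'.2 + 1) := by
  obtain ⟨i, hi, rfl⟩ := List.mem_iff_getElem.mp hc
  rcases i with _ | i
  · exact .inl (List.getElem_zero hi ▸ hp.val_head _)
  · obtain ⟨-, -, -, hchain, -⟩ := hp
    exact .inr ⟨_, List.getElem_mem _, (List.isChain_iff_getElem.mp hchain i hi).1⟩

theorem transpose (hp : IsPromPath Q a b p) : IsPromPath Q.transpose a b (p.map Prod.swap) := by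
  obtain ⟨hne, hmem, ⟨c₀, hc₀, hc₀v⟩, hchain, hlast⟩ := hp
  have hswap (c e : ℕ × ℕ) :
      (e = (c.swap.1 + 1, c.swap.2) ∨ e = (c.swap.1, c.swap.2 + 1)) ↔
      (e.swap = (c.1 + 1, c.2) ∨ e.swap = (c.1, c.2 + 1)) := by
    obtain ⟨e1, e2⟩ := e
    simp only [Prod.fst_swap, Prod.snd_swap, Prod.swap_prod_mk, Prod.mk.injEq]
    tauto
  refine ⟨by simpa using hne, fun c hc => ?_,
    ⟨c₀.swap, by simp [hc₀], by simpa using hc₀v⟩,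
    (List.isChain_map _).mpr (hchain.imp fun c d hcd => ?_), fun last hl e he hes => ?_⟩
  · obtain ⟨c', hc', rfl⟩ := List.mem_map.mp hc
    simpa using hmem c' hc'
  · exact ⟨(hswap c d.swap).mpr (by simpa using hcd.1),
      fun e he hes hev => hcd.2 e.swap ((hswap c e).mp he) (by simpa using hes) hev⟩
  · simp only [List.getLast?_map, Option.map_eq_some_iff] at hl
    obtain ⟨last, hl, rfl⟩ := hl
    exact hlast last hl e.swap ((hswap last e).mp he) (by simpa using hes)

end IsPromPath

namespace PromotesAlong

theorem isPromPath (h : PromotesAlong a b Q Q' p) : IsPromPath Q a b p :=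
  h.1

theorem val_getLast (h : PromotesAlong a b Q Q' p) {c : ℕ × ℕ} (hc : p.getLast? = some c) :
    Q'.val c = b :=
  h.2.2.1 c hc

theorem val_of_not_mem (h : PromotesAlong a b Q Q' p) {c : ℕ × ℕ} (hc : c ∈ Q.shape)
    (hcp : c ∉ p) :
    Q'.val c = if Q.val c ∈ Finset.Icc (a + 1) b then Q.val c - 1 else Q.val c :=
  h.2.2.2 c hc hcp

theorem val_eq_or_exists_succ (h : PromotesAlong a b Q Q' p) {c : ℕ × ℕ} (hc : c ∈ p) :
    Q'.val c = b ∨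
      ∃ z ∈ p, (z = (c.1 + 1, c.2) ∨ z = (c.1, c.2 + 1)) ∧ Q'.val c = Q.val z - 1 := by
  have ⟨⟨_, _, _, hchain, _⟩, hnext, _, _⟩ := h
  obtain ⟨i, hi, rfl⟩ := List.mem_iff_getElem.mp hc
  by_cases hi' : i + 1 < p.length
  · exact .inr ⟨_, List.getElem_mem hi', (List.isChain_iff_getElem.mp hchain i hi').1,
      hnext i hi'⟩
  · refine .inl (h.val_getLast ?_)
    rw [List.getLast?_eq_getElem?, List.getElem?_eq_getElem (by omega)]
    congr 2
    omega

theorem val_mem_Icc (h : PromotesAlong a b Q Q' p) {c : ℕ × ℕ} (hc : c ∈ p) :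
    Q'.val c ∈ Finset.Icc a b := by
  have hcv := Finset.mem_Icc.mp (h.isPromPath.val_mem_Icc hc)
  rcases h.val_eq_or_exists_succ hc with hb | ⟨z, hz, hcz, hv⟩
  · exact Finset.mem_Icc.mpr ⟨by omega, hb.le⟩
  · have hzv := Finset.mem_Icc.mp (h.isPromPath.val_mem_Icc hz)
    have : Q.val c < Q.val z := Q.val_lt_val (h.isPromPath.mem_shape hz) (by
      rcases hcz with rfl | rfl
      exacts [Prod.lt_mk_succ_fst c, Prod.lt_mk_succ_snd c])
    exact Finset.mem_Icc.mpr ⟨by omega, by omega⟩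

theorem transpose (h : PromotesAlong a b Q Q' p) :
    PromotesAlong a b Q.transpose Q'.transpose (p.map Prod.swap) := by
  obtain ⟨hp, hnext, hlast, hoff⟩ := h
  refine ⟨hp.transpose, fun i hi => ?_, fun last hl => ?_, fun c hc hcp => ?_⟩
  · simp only [List.length_map] at hi
    simpa using hnext i hi
  · simp only [List.getLast?_map, Option.map_eq_some_iff] at hl
    obtain ⟨last, hl, rfl⟩ := hl
    simpa using hlast last hl
  · exact hoff c.swap (by simpa using hc) fun h => hcp (List.mem_map.mpr ⟨_, h, by simp⟩)

end PromotesAlong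

theorem IsPromotion.transpose (h : IsPromotion a b Q Q') :
    IsPromotion a b Q.transpose Q'.transpose := by
  obtain ⟨hsh, p, hp⟩ := isPromotion_iff.mp h
  exact ⟨by ext; simp [SYT.transpose, hsh], p.map Prod.swap, hp.transpose⟩

end Promotion

section DoublePromotion

variable {n u k : ℕ} {Q Q1 : SYT n} {p q : List (ℕ × ℕ)}

def AbovePath (p : List (ℕ × ℕ)) (x : ℕ × ℕ) : Prop :=
  (x ∈ p ∧ (x.1 + 1, x.2) ∈ p) ∨ ∀ c ∈ p, x.1 < c.1 ∨ c.2 < x.2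

namespace PromotesAlong

/-- If `p` turned right at `y`, the cell right of `x` would be a smaller neighbour of `x` in `Q1`
than `y`. -/
theorem down_mem_of_down_mem (hp : PromotesAlong (u + 1) (k + 2) Q Q1 p)
    (hsh : Q1.shape = Q.shape) {x y : ℕ × ℕ} (hx : u ≤ Q1.val x) (hyv : Q1.val y ≤ k + 1)
    (hmin : ∀ e, (e = (x.1 + 1, x.2) ∨ e = (x.1, x.2 + 1)) → e ∈ Q1.shape →
      Q1.val e ∈ Finset.Icc u (k + 1) → Q1.val y ≤ Q1.val e)
    (hyx : y = (x.1 + 1, x.2)) (hyp : y ∈ p) : (y.1 + 1, y.2) ∈ p := by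
  rcases hp.val_eq_or_exists_succ hyp with hb | ⟨z, hz, rfl | rfl, hyz⟩
  · omega
  · exact hz
  exfalso
  subst hyx
  set w : ℕ × ℕ := (x.1, x.2 + 1)
  have hwz : w < (x.1 + 1, x.2 + 1) := Prod.lt_mk_succ_fst w
  have hwS : w ∈ Q.shape := Q.mem_of_le (hp.isPromPath.mem_shape hz) hwz.le
  have hwp : w ∉ p := fun hw => by
    rcases hp.isPromPath.le_total hw hyp with h | h <;> simp [w, Prod.le_def] at h
  have hQw := Q.val_lt_val (hp.isPromPath.mem_shape hz) hwz
  have hQz := Finset.mem_Icc.mp (hp.isPromPath.val_mem_Icc hz)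
  have hQw' : Q.val w ≠ u + 1 := fun h => hwp (hp.isPromPath.mem_of_val_eq hwS h)
  have hxw : Q1.val x < Q1.val w := Q1.val_lt_val (hsh ▸ hwS) (Prod.lt_mk_succ_snd x)
  have hoff := hp.val_of_not_mem hwS hwp
  simp only [Finset.mem_Icc] at hoff
  split_ifs at hoff
  · have := hmin w (.inr rfl) (hsh ▸ hwS) (Finset.mem_Icc.mpr ⟨by omega, by omega⟩)
    omega
  · omega

/-- Walking back along `p` from a cell in the row of `y = (x.1 + 1, x.2)` and right of `y`, one
either enters that row from a cell weakly north-east of `x`, or reaches the start of `p`, whose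
entry `u + 1` would then exceed the entry of `y`. -/
theorem snd_le_of_fst_eq (hp : PromotesAlong (u + 1) (k + 2) Q Q1 p)
    (hsh : Q1.shape = Q.shape) {x : ℕ × ℕ} (hx : u ≤ Q1.val x)
    (hxp : ∀ c ∈ p, x.1 < c.1 ∨ c.2 < x.2)
    (hyS : (x.1 + 1, x.2) ∈ Q.shape) (hyp : (x.1 + 1, x.2) ∉ p) :
    ∀ c ∈ p, c.1 = x.1 + 1 → c.2 ≤ x.2 := by
  suffices ∀ m, ∀ c ∈ p, c.1 = x.1 + 1 → c.2 = m → m ≤ x.2 from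
    fun c hc hcx => this _ c hc hcx rfl
  intro m
  induction m using Nat.strong_induction_on with
  | _ m ih =>
    intro c hc hcx hcm
    rcases hp.isPromPath.val_eq_or_exists_pred hc with hcv | ⟨c', hc', rfl | rfl⟩
    · by_contra! hm
      have hyc : ((x.1 + 1, x.2) : ℕ × ℕ) < c := Prod.lt_iff.mpr (.inr ⟨hcx.ge, by omega⟩)
      have hQy := Q.val_lt_val (hp.isPromPath.mem_shape hc) hyc
      have hxy := Q1.val_lt_val (hsh ▸ hyS) (Prod.lt_mk_succ_fst x)
      rw [hp.val_of_not_mem hyS hyp, if_neg (by simp; omega)] at hxy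
      omega
    · have := hxp c' hc'
      simp only at hcx hcm
      omega
    · simp only at hcx hcm
      rcases (ih c'.2 (by omega) c' hc' hcx rfl).eq_or_lt with heq | hlt
      · exact absurd ((Prod.ext hcx heq : c' = (x.1 + 1, x.2)) ▸ hc') hyp
      · omega

theorem abovePath_of_step (hp : PromotesAlong (u + 1) (k + 2) Q Q1 p)
    (hsh : Q1.shape = Q.shape) {x y : ℕ × ℕ} (hx : u ≤ Q1.val x) (hyv : Q1.val y ≤ k + 1)
    (hyS : y ∈ Q1.shape)
    (hxy : (y = (x.1 + 1, x.2) ∨ y = (x.1, x.2 + 1)) ∧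
      ∀ e, (e = (x.1 + 1, x.2) ∨ e = (x.1, x.2 + 1)) → e ∈ Q1.shape →
        Q1.val e ∈ Finset.Icc u (k + 1) → Q1.val y ≤ Q1.val e)
    (hinv : AbovePath p x) : AbovePath p y := by
  obtain ⟨rfl | rfl, hmin⟩ := hxy
  · by_cases hyp : (x.1 + 1, x.2) ∈ p
    · exact .inl ⟨hyp, hp.down_mem_of_down_mem hsh hx hyv hmin rfl hyp⟩
    rcases hinv with ⟨-, hdp⟩ | hxp
    · exact absurd hdp hyp
    refine .inr fun c hc => ?_
    have hc1 := hxp c hc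
    have hc2 := hp.snd_le_of_fst_eq hsh hx hxp (hsh ▸ hyS) hyp c hc
    by_contra! hcy
    exact hyp ((Prod.ext (by simp at hcy ⊢; omega) (by simp at hcy ⊢; omega) :
      c = (x.1 + 1, x.2)) ▸ hc)
  · refine .inr fun c hc => ?_
    rcases hinv with ⟨-, hdp⟩ | hxp
    · rcases hp.isPromPath.le_total hc hdp with h | h <;>
        simp only [Prod.le_def] at h <;> omega
    · have := hxp c hc
      simp only
      omega

theorem abovePath_of_mem (hp : PromotesAlong (u + 1) (k + 2) Q Q1 p)
    (hsh : Q1.shape = Q.shape) (hq : IsPromPath Q1 u (k + 1) q) {c : ℕ × ℕ}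
    (hc : c ∈ Q1.shape) (hcv : Q1.val c = u) (hc₀ : AbovePath p c) :
    ∀ x ∈ q, AbovePath p x := by
  have ⟨_, _, _, hchain, _⟩ := hq
  refine (List.IsChain.iff_mem.mp hchain).induction _ _ (fun x y ⟨hx, hy, hxy⟩ hinv => ?_)
    fun hne => ?_
  · exact hp.abovePath_of_step hsh (Finset.mem_Icc.mp (hq.val_mem_Icc hx)).1
      (Finset.mem_Icc.mp (hq.val_mem_Icc hy)).2 (hq.mem_shape hy) hxy hinv
  · have hhead := hq.val_head hne
    rwa [Q1.eq_of_val_eq (hq.mem_shape (List.head_mem hne)) hc (hhead.trans hcv.symm)]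

theorem fst_lt_of_abovePath (hp : PromotesAlong (u + 1) (k + 2) Q Q1 p)
    (hsh : Q1.shape = Q.shape) {x y : ℕ × ℕ} (hinv : AbovePath p x) (hxS : x ∈ Q1.shape)
    (hxv : Q1.val x ≤ k + 1)
    (hstop : ∀ e, (e = (x.1 + 1, x.2) ∨ e = (x.1, x.2 + 1)) → e ∈ Q1.shape →
      Q1.val e ∉ Finset.Icc u (k + 1))
    (hy : y ∈ p) (hyv : Q1.val y = k + 2) : x.1 < y.1 := by
  rcases hinv with ⟨-, hdp⟩ | hxp
  · have hd := hp.val_mem_Icc hdp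
    have hdS : (x.1 + 1, x.2) ∈ Q1.shape := hsh ▸ hp.isPromPath.mem_shape hdp
    have := hstop _ (.inl rfl) hdS
    simp only [Finset.mem_Icc] at hd this
    obtain rfl := Q1.eq_of_val_eq hdS (hsh ▸ hp.isPromPath.mem_shape hy) (by omega)
    simp
  · rcases hxp y hy with h | h
    · exact h
    by_contra! hyx
    have := Q1.val_le_val hxS (show y ≤ x from ⟨hyx, h.le⟩)
    omega

end PromotesAlong

theorem fst_lt_fst_of_isPromotion {Q2 : SYT n} (h1 : IsPromotion (u + 1) (k + 2) Q Q1)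
    (h2 : IsPromotion u (k + 1) Q1 Q2) {c d c' d' : ℕ × ℕ} (hc : c ∈ Q.shape)
    (hd : d ∈ Q.shape) (hcv : Q.val c = u) (hdv : Q.val d = u + 1) (hc' : c' ∈ Q2.shape)
    (hd' : d' ∈ Q2.shape) (hc'v : Q2.val c' = k + 1) (hd'v : Q2.val d' = k + 2)
    (hcd : c.1 < d.1) : c'.1 < d'.1 := by
  obtain ⟨hsh1, p, hp⟩ := isPromotion_iff.mp h1
  obtain ⟨hsh2, q, hq⟩ := isPromotion_iff.mp h2
  have hpath := hp.isPromPath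
  have hqpath := hq.isPromPath
  have ⟨hqne, _, _, _, hqstop⟩ := hqpath
  have hx := List.getLast?_eq_some_getLast hqne
  have hy := List.getLast?_eq_some_getLast hpath.1
  set x := q.getLast hqne
  set y := p.getLast hpath.1
  have hxq := List.mem_of_getLast? hx
  have hyp := List.mem_of_getLast? hy
  have hyS : y ∈ Q1.shape := hsh1 ▸ hpath.mem_shape hyp
  have hyq : y ∉ q := fun h => by
    have := hqpath.val_mem_Icc h
    simp only [Finset.mem_Icc, hp.val_getLast hy] at this
    omega
  obtain rfl : c' = x :=
    Q2.eq_of_val_eq hc' (hsh2 ▸ hqpath.mem_shape hxq) (hc'v.trans (hq.val_getLast hx).symm)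
  obtain rfl : d' = y := Q2.eq_of_val_eq hd' (hsh2 ▸ hyS) (by
    rw [hd'v, hq.val_of_not_mem hyS hyq, hp.val_getLast hy, if_neg (by simp)])
  have hcp : c ∉ p := fun h => by
    have := hpath.val_mem_Icc h
    simp only [Finset.mem_Icc] at this
    omega
  have hcv₁ : Q1.val c = u := by rw [hp.val_of_not_mem hc hcp, if_neg (by simp; omega), hcv]
  have hc₀ : AbovePath p c := .inr fun e he =>
    .inl (hcd.trans_le (hpath.le_of_val_eq (hpath.mem_of_val_eq hd hdv) he hdv).1)
  have hinv := hp.abovePath_of_mem hsh1 hqpath (hsh1 ▸ hc) hcv₁ hc₀ _ hxq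
  exact hp.fst_lt_of_abovePath hsh1 hinv
    (hsh1 ▸ hqpath.mem_shape hxq) (Finset.mem_Icc.mp (hqpath.val_mem_Icc hxq)).2
    (hqstop _ hx) hyp (hp.val_getLast hy)

end DoublePromotion

/-- For a standard Young tableau `Q` with `n` cells and
`u ≤ k+1 < n` (with `1 ≤ u`): `u ∈ Des(Q)` iff `k+1 ∈ Des(∂_u^{k+1} ∘ ∂_{u+1}^{k+2} Q)`. -/
theorem des_double_promotion (n : ℕ) (Q Q1 Q2 : SYT n) (u k : ℕ) (hu : 1 ≤ u)
    (huk : u ≤ k + 1) (hkn : k + 1 < n)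
    (h1 : IsPromotion (u + 1) (k + 2) Q Q1) (h2 : IsPromotion u (k + 1) Q1 Q2) :
    u ∈ Q.des ↔ k + 1 ∈ Q2.des := by
  obtain ⟨c, hc, hcv⟩ := Q.exists_val_eq (v := u) (by simp; omega)
  obtain ⟨d, hd, hdv⟩ := Q.exists_val_eq (v := u + 1) (by simp; omega)
  obtain ⟨c', hc', hc'v⟩ := Q2.exists_val_eq (v := k + 1) (by simp; omega)
  obtain ⟨d', hd', hd'v⟩ := Q2.exists_val_eq (v := k + 2) (by simp; omega)
  rw [Q.mem_des_iff hc hd hcv hdv, Q2.mem_des_iff hc' hd' hc'v hd'v]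
  refine ⟨fst_lt_fst_of_isPromotion h1 h2 hc hd hcv hdv hc' hd' hc'v hd'v, fun hcd' => ?_⟩
  by_contra hcd
  rw [Q.fst_lt_iff_not_snd_lt hc hd (by omega), not_not] at hcd
  have := fst_lt_fst_of_isPromotion h1.transpose h2.transpose (c := c.swap) (d := d.swap)
    (c' := c'.swap) (d' := d'.swap) (by simpa) (by simpa) (by simpa) (by simpa) (by simpa)
    (by simpa) (by simpa) (by simpa) hcd
  exact (Q2.fst_lt_iff_not_snd_lt hc' hd' (by omega)).mp hcd' this
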